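/- Suppose the true distributions G^n and the R^(α)-marginal distributions M_n merge with probability one, i.e., for every ε > 0, P( m_n(X_n)/g^n(X_n) ≤ e^{−nε} infinitely often ) = 0. Let A_n ∈ B_{Θ_n} be any sequence of measurable parameter sets. Then the following are equivalent: (i) there exists r > 0 such that P( π_n^{post}(A_n^c | X_n) ≥ e^{−nr} infinitely often ) = 0; (ii) there exist constants r_1, r_2 > 0 and measurable sets B_n, C_n ∈ B_{Θ_n} such that A_n ∪ B_n ∪ C_n = Θ_n, M_n(χ_n, B_n)/M_n(χ_n, Θ_n) ≤ e^{−n r_1}, and there exist S_n ∈ B_n with P(X_n ∈ S_n infinitely often) = 0 and sup_{θ∈C_n} Q_n(S_n^c|θ)/Q_n(χ_n|θ) ≤ e^{−n r_2}. -/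

import Mathlib

/-!
(i) ⇒ (ii): write `r = 2t`, let `S_n` be the data at which the posterior of `A_nᶜ` is at least
`e^{-2nt}`, `C_n` the parameters of `A_nᶜ` under which `Q_n(S_nᶜ|θ) ≤ e^{-nt} Q_n(χ_n|θ)`, and
`B_n = A_nᶜ \ C_n`. Off `S_n` the unnormalised posterior mass of `A_nᶜ` is at most `e^{-2nt}` times
the total one, so by Tonelli `M_n(S_nᶜ, A_nᶜ) ≤ e^{-2nt} M_n(χ_n, Θ_n)`; on `B_n` we have
`Q_n(χ_n|θ) < e^{nt} Q_n(S_nᶜ|θ)`, whence `M_n(χ_n, B_n) ≤ e^{-nt} M_n(χ_n, Θ_n)`.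

(ii) ⇒ (i): take `4s ≤ min r₁ r₂`. For `(S, D) = (χ_n, B_n)` and `(S_nᶜ, C_n)`, the function
`x ↦ 1_S(x) · (posterior mass of D at x) / M_n(χ_n, Θ_n)` has `λ^n`-integral
`M_n(S, D) / M_n(χ_n, Θ_n) ≤ e^{-4ns}`. Markov's inequality under the law `g^n λ^n` and
Borel–Cantelli make its ratio to `g^n(X_n)` eventually smaller than `e^{-2ns}`, and merging makes
`g^n(X_n)` eventually at most `e^{ns} m_n(X_n)`. So eventually `X_n ∉ S_n` and the posterior
masses of `B_n` and `C_n` are at most `e^{-ns}` times the normaliser, hence that of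
`A_nᶜ ⊆ B_n ∪ C_n` is at most `2e^{-ns} < e^{-ns/2}`.
-/

open MeasureTheory ENNReal Filter

noncomputable section

variable {χ Θ : ℕ → Type*} [∀ n, MeasurableSpace (χ n)] [∀ n, MeasurableSpace (Θ n)]

/-- `Q_n(S|θ) = ∫_S exp(q_n(x|θ)) λ^n(dx)`. -/
def Qfun (lam : ∀ n, Measure (χ n)) (q : ∀ n, χ n → Θ n → ℝ) (n : ℕ)
    (S : Set (χ n)) (θ : Θ n) : ℝ≥0∞ :=
  ∫⁻ x in S, ENNReal.ofReal (Real.exp (q n x θ)) ∂(lam n)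

/-- `M_n(S, A) = ∫_A Q_n(S|θ) π_n(dθ)`. -/
def Mfun (lam : ∀ n, Measure (χ n)) (prior : ∀ n, Measure (Θ n))
    (q : ∀ n, χ n → Θ n → ℝ) (n : ℕ) (S : Set (χ n)) (A : Set (Θ n)) : ℝ≥0∞ :=
  ∫⁻ θ in A, Qfun lam q n S θ ∂(prior n)

/-- The `R^(α)`-posterior probability of `A` given `x`. -/
def rpost (prior : ∀ n, Measure (Θ n)) (q : ∀ n, χ n → Θ n → ℝ) (n : ℕ)
    (A : Set (Θ n)) (x : χ n) : ℝ≥0∞ :=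
  (∫⁻ θ in A, ENNReal.ofReal (Real.exp (q n x θ)) ∂(prior n)) /
    (∫⁻ θ, ENNReal.ofReal (Real.exp (q n x θ)) ∂(prior n))

/-- The `R^(α)`-marginal density `m_n(x)`. -/
def rmarg (lam : ∀ n, Measure (χ n)) (prior : ∀ n, Measure (Θ n))
    (q : ∀ n, χ n → Θ n → ℝ) (n : ℕ) (x : χ n) : ℝ≥0∞ :=
  (∫⁻ θ, ENNReal.ofReal (Real.exp (q n x θ)) ∂(prior n)) /
    Mfun lam prior q n Set.univ Set.univ

namespace ENNReal

theorem le_div_of_lt_div {a b c : ℝ≥0∞} (h : c < a / b) : b ≤ a / c := by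
  have ha : a ≠ 0 := by rintro rfl; simp at h
  rw [ENNReal.le_div_iff_mul_le (Or.inr ha) (Or.inl h.ne_top), mul_comm]
  exact mul_le_of_le_div h.le

theorem le_div_mul_of_div_lt_of_lt_div {f m y c d : ℝ≥0∞} (hd : d ≠ ∞) (hf : f / y < d)
    (hm : c < m / y) : f ≤ d / c * m :=
  calc f ≤ d * y := (ENNReal.div_le_iff_le_mul (Or.inr hd) (Or.inr (pos_of_gt hf).ne')).1 hf.le
    _ ≤ d * (m / c) := by gcongr; exact le_div_of_lt_div hm
    _ = d / c * m := by rw [← mul_div_assoc, ENNReal.mul_div_right_comm]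

end ENNReal

def decay (r : ℝ) (n : ℕ) : ℝ≥0∞ := ENNReal.ofReal (Real.exp (-((n : ℝ) * r)))

section Decay

variable {r s : ℝ} {n : ℕ}

theorem decay_ne_zero : decay r n ≠ 0 := by simp [decay, Real.exp_pos]

theorem decay_ne_top : decay r n ≠ ∞ := ofReal_ne_top

theorem decay_eq_pow (r : ℝ) (n : ℕ) : decay r n = ENNReal.ofReal (Real.exp (-r)) ^ n := by
  rw [decay, ← ofReal_pow (Real.exp_pos _).le, ← Real.exp_nat_mul, mul_neg]

theorem decay_add (r s : ℝ) (n : ℕ) : decay (r + s) n = decay r n * decay s n := by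
  rw [decay, decay, decay, ← ofReal_mul (Real.exp_pos _).le, ← Real.exp_add, mul_add, neg_add]

theorem decay_le_decay (h : r ≤ s) (n : ℕ) : decay s n ≤ decay r n :=
  ofReal_le_ofReal <| Real.exp_le_exp.2 <| neg_le_neg <|
    mul_le_mul_of_nonneg_left h n.cast_nonneg

theorem decay_two_mul_div_decay (r : ℝ) (n : ℕ) : decay (2 * r) n / decay r n = decay r n := by
  rw [two_mul, decay_add, ENNReal.mul_div_cancel_right decay_ne_zero decay_ne_top]

theorem decay_base_lt_one (hr : 0 < r) : ENNReal.ofReal (Real.exp (-r)) < 1 :=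
  ofReal_lt_one.2 (Real.exp_lt_one_iff.2 (neg_neg_of_pos hr))

theorem tsum_decay_ne_top (hr : 0 < r) : ∑' n, decay r n ≠ ∞ := by
  simp_rw [decay_eq_pow, ENNReal.tsum_geometric]
  exact ENNReal.inv_ne_top.2 (tsub_pos_of_lt (decay_base_lt_one hr)).ne'

theorem eventually_decay_add_decay_lt (hr : 0 < r) :
    ∀ᶠ n in atTop, decay r n + decay r n < decay (r / 2) n := by
  have hlim : Tendsto (decay (r / 2)) atTop (nhds 0) := by
    simp_rw [funext (decay_eq_pow (r / 2)), ENNReal.tendsto_pow_atTop_nhds_zero_iff]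
    exact decay_base_lt_one (half_pos hr)
  filter_upwards [hlim.eventually_lt_const (by norm_num : (0 : ℝ≥0∞) < 2⁻¹)] with n hn
  calc decay r n + decay r n = 2 * decay (r / 2) n * decay (r / 2) n := by
        rw [← two_mul, mul_assoc, ← decay_add, add_halves]
    _ < 2 * 2⁻¹ * decay (r / 2) n := by
        gcongr
        · exact decay_ne_zero
        · exact decay_ne_top
        · exact ofNat_ne_top
    _ = decay (r / 2) n := by rw [ENNReal.mul_inv_cancel two_ne_zero ofNat_ne_top, one_mul]

end Decay

theorem measure_limsup_atTop_eq_zero_iff {α : Type*} [MeasurableSpace α] {μ : Measure α}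
    {s : ℕ → Set α} : μ (limsup s atTop) = 0 ↔ ∀ᵐ x ∂μ, ∀ᶠ n in atTop, x ∉ s n := by
  simp only [ae_iff, not_eventually, not_not, ← mem_limsup_iff_frequently_mem, Set.ofPred_mem_eq]

theorem measure_limsup_setOf_le_eq_zero_iff {α β : Type*} [MeasurableSpace α] [LinearOrder β]
    {μ : Measure α} {u v : ℕ → α → β} :
    μ (limsup (fun n => {x | u n x ≤ v n x}) atTop) = 0 ↔
      ∀ᵐ x ∂μ, ∀ᶠ n in atTop, v n x < u n x := by
  simp only [measure_limsup_atTop_eq_zero_iff, Set.mem_ofPred_eq, not_le]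

section Markov

variable {Ω : Type*} [MeasurableSpace Ω] {P : Measure Ω}

theorem mul_measure_le_div_density_le_lintegral {𝒳 : Type*} [MeasurableSpace 𝒳] {μ : Measure 𝒳}
    {X : Ω → 𝒳} (hX : Measurable X) {g : 𝒳 → ℝ≥0∞} (hg : Measurable g)
    (hlaw : P.map X = μ.withDensity g) {f : 𝒳 → ℝ≥0∞} (hf : Measurable f) (t : ℝ≥0∞) :
    t * P {ω | t ≤ f (X ω) / g (X ω)} ≤ ∫⁻ x, f x ∂μ := by
  have hset : MeasurableSet {x | t ≤ f x / g x} := measurableSet_le measurable_const (hf.div hg)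
  calc t * P {ω | t ≤ f (X ω) / g (X ω)} = t * μ.withDensity g {x | t ≤ f x / g x} := by
        rw [← hlaw, Measure.map_apply hX hset]; rfl
    _ ≤ ∫⁻ x, f x / g x ∂μ.withDensity g :=
        mul_meas_ge_le_lintegral₀ (hf.div hg).aemeasurable t
    _ = ∫⁻ x, g x * (f x / g x) ∂μ := lintegral_withDensity_eq_lintegral_mul₀ hg.aemeasurable
        (hf.div hg).aemeasurable
    _ ≤ ∫⁻ x, f x ∂μ := lintegral_mono fun x => ENNReal.mul_div_le

theorem ae_eventually_div_density_lt {χ : ℕ → Type*} [∀ n, MeasurableSpace (χ n)]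
    {X : ∀ n, Ω → χ n} (hX : ∀ n, Measurable (X n))
    {lam : ∀ n, Measure (χ n)} {g : ∀ n, χ n → ℝ≥0∞} (hg : ∀ n, Measurable (g n))
    (hlaw : ∀ n, P.map (X n) = (lam n).withDensity (g n)) {f : ∀ n, χ n → ℝ≥0∞}
    (hf : ∀ n, Measurable (f n)) {c : ℝ} (hc : 0 < c)
    (hint : ∀ n, ∫⁻ x, f n x ∂lam n ≤ decay (2 * c) n) :
    ∀ᵐ ω ∂P, ∀ᶠ n in atTop, f n (X n ω) / g n (X n ω) < decay c n := by
  have hmeas : ∀ n, P {ω | decay c n ≤ f n (X n ω) / g n (X n ω)} ≤ decay c n := fun n => by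
    refine (ENNReal.mul_le_mul_iff_right (a := decay c n) decay_ne_zero decay_ne_top).1 ?_
    calc decay c n * P {ω | decay c n ≤ f n (X n ω) / g n (X n ω)} ≤ ∫⁻ x, f n x ∂lam n :=
          mul_measure_le_div_density_le_lintegral (hX n) (hg n) (hlaw n) (hf n) _
      _ ≤ decay c n * decay c n := by rw [← decay_add, ← two_mul]; exact hint n
  filter_upwards [ae_eventually_notMem
    (ne_top_of_le_ne_top (tsum_decay_ne_top hc) (ENNReal.tsum_le_tsum hmeas))] with ω hω
  exact hω.mono fun n hn => not_le.1 hn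

end Markov

section Model

variable {χ Θ : ℕ → Type*} [∀ n, MeasurableSpace (Θ n)] (prior : ∀ n, Measure (Θ n))
  (q : ∀ n, χ n → Θ n → ℝ) (n : ℕ)

def postMass (A : Set (Θ n)) (x : χ n) : ℝ≥0∞ :=
  ∫⁻ θ in A, ENNReal.ofReal (Real.exp (q n x θ)) ∂(prior n)

theorem rpost_eq_postMass_div (A : Set (Θ n)) (x : χ n) :
    rpost prior q n A x = postMass prior q n A x / postMass prior q n Set.univ x := by
  rw [rpost, postMass, postMass, Measure.restrict_univ]

variable {prior q n}

theorem rpost_compl_le_add {A B C : Set (Θ n)} (hcov : A ∪ B ∪ C = Set.univ) {x : χ n}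
    {a b : ℝ≥0∞} (hB : postMass prior q n B x ≤ a * postMass prior q n Set.univ x)
    (hC : postMass prior q n C x ≤ b * postMass prior q n Set.univ x) :
    rpost prior q n Aᶜ x ≤ a + b := by
  have hsub : Aᶜ ⊆ B ∪ C := fun θ hθ => by
    have : θ ∈ A ∪ B ∪ C := hcov ▸ Set.mem_univ θ
    rcases this with (hA | hB) | hC
    exacts [absurd hA hθ, Or.inl hB, Or.inr hC]
  rw [rpost_eq_postMass_div]
  refine ENNReal.div_le_of_le_mul ?_
  calc postMass prior q n Aᶜ x ≤ postMass prior q n (B ∪ C) x := lintegral_mono_set hsub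
    _ ≤ postMass prior q n B x + postMass prior q n C x := lintegral_union_le _ _ _
    _ ≤ (a + b) * postMass prior q n Set.univ x := by rw [add_mul]; gcongr

variable [∀ n, MeasurableSpace (χ n)] (lam : ∀ n, Measure (χ n))

theorem rmarg_eq_postMass_div (x : χ n) :
    rmarg lam prior q n x =
      postMass prior q n Set.univ x / Mfun lam prior q n Set.univ Set.univ := by
  rw [rmarg, postMass, Measure.restrict_univ]

variable {lam}

theorem measurable_postMass [SFinite (prior n)]
    (hq : Measurable fun z : χ n × Θ n => q n z.1 z.2) (A : Set (Θ n)) :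
    Measurable (postMass prior q n A) :=
  (Real.measurable_exp.comp hq).ennreal_ofReal.lintegral_prod_right'

theorem measurable_rpost [SFinite (prior n)]
    (hq : Measurable fun z : χ n × Θ n => q n z.1 z.2) (A : Set (Θ n)) :
    Measurable (rpost prior q n A) := by
  simp_rw [funext (rpost_eq_postMass_div prior q n A)]
  exact (measurable_postMass hq A).div (measurable_postMass hq Set.univ)

theorem Mfun_eq_setLIntegral_postMass [SFinite (lam n)] [SFinite (prior n)]
    (hq : Measurable fun z : χ n × Θ n => q n z.1 z.2) (S : Set (χ n))
    (A : Set (Θ n)) : Mfun lam prior q n S A = ∫⁻ x in S, postMass prior q n A x ∂lam n :=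
  lintegral_lintegral_swap (f := fun θ x => ENNReal.ofReal (Real.exp (q n x θ)))
    (Real.measurable_exp.comp (hq.comp measurable_swap)).ennreal_ofReal.aemeasurable

theorem Mfun_le_mul_of_rpost_lt [SFinite (lam n)] [SFinite (prior n)]
    (hq : Measurable fun z : χ n × Θ n => q n z.1 z.2) {S : Set (χ n)} (hS : MeasurableSet S)
    {A : Set (Θ n)} {c : ℝ≥0∞} (hc : c ≠ ∞) (h : ∀ x ∈ S, rpost prior q n A x < c) :
    Mfun lam prior q n S A ≤ c * Mfun lam prior q n Set.univ Set.univ := by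
  rw [Mfun_eq_setLIntegral_postMass hq, Mfun_eq_setLIntegral_postMass hq, Measure.restrict_univ]
  calc ∫⁻ x in S, postMass prior q n A x ∂lam n
      ≤ ∫⁻ x in S, c * postMass prior q n Set.univ x ∂lam n := by
        refine setLIntegral_mono' hS fun x hx => ?_
        have hlt := h x hx
        rw [rpost_eq_postMass_div] at hlt
        exact (ENNReal.div_le_iff_le_mul (Or.inr hc) (Or.inr (pos_of_gt hlt).ne')).1 hlt.le
    _ = c * ∫⁻ x in S, postMass prior q n Set.univ x ∂lam n := lintegral_const_mul' c _ hc
    _ ≤ c * ∫⁻ x, postMass prior q n Set.univ x ∂lam n :=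
        mul_le_mul_right (setLIntegral_le_lintegral _ _) c

theorem Mfun_le_div_of_lt_Qfun_div {S : Set (χ n)} {B : Set (Θ n)} (hB : MeasurableSet B)
    {d : ℝ≥0∞} (hd : d ≠ 0) (h : ∀ θ ∈ B, d < Qfun lam q n S θ / Qfun lam q n Set.univ θ) :
    Mfun lam prior q n Set.univ B ≤ Mfun lam prior q n S B / d := by
  calc Mfun lam prior q n Set.univ B ≤ ∫⁻ θ in B, Qfun lam q n S θ * d⁻¹ ∂prior n :=
        setLIntegral_mono' hB fun θ hθ => ENNReal.le_div_of_lt_div (h θ hθ)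
    _ = Mfun lam prior q n S B / d := lintegral_mul_const' _ _ (ENNReal.inv_ne_top.2 hd)

theorem Mfun_le_mul_of_Qfun_div_le {S : Set (χ n)} {C : Set (Θ n)} (hC : MeasurableSet C)
    {c : ℝ≥0∞} (hc₀ : c ≠ 0) (hc : c ≠ ∞)
    (h : ∀ θ ∈ C, Qfun lam q n S θ / Qfun lam q n Set.univ θ ≤ c) :
    Mfun lam prior q n S C ≤ c * Mfun lam prior q n Set.univ Set.univ := by
  calc Mfun lam prior q n S C ≤ ∫⁻ θ in C, c * Qfun lam q n Set.univ θ ∂prior n :=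
        setLIntegral_mono' hC fun θ hθ =>
          (ENNReal.div_le_iff_le_mul (Or.inr hc) (Or.inr hc₀)).1 (h θ hθ)
    _ = c * Mfun lam prior q n Set.univ C := lintegral_const_mul' c _ hc
    _ ≤ c * Mfun lam prior q n Set.univ Set.univ := by
        gcongr; exact lintegral_mono_set (Set.subset_univ C)

theorem Mfun_le_div_mul_of_rpost_lt [SFinite (lam n)] [SFinite (prior n)]
    (hq : Measurable fun z : χ n × Θ n => q n z.1 z.2) {S : Set (χ n)} (hS : MeasurableSet S)
    {A B : Set (Θ n)} (hB : MeasurableSet B) (hBA : B ⊆ A) {c d : ℝ≥0∞} (hc : c ≠ ∞)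
    (hd : d ≠ 0) (hpost : ∀ x ∈ S, rpost prior q n A x < c)
    (hratio : ∀ θ ∈ B, d < Qfun lam q n S θ / Qfun lam q n Set.univ θ) :
    Mfun lam prior q n Set.univ B ≤ c / d * Mfun lam prior q n Set.univ Set.univ :=
  calc Mfun lam prior q n Set.univ B ≤ Mfun lam prior q n S B / d :=
        Mfun_le_div_of_lt_Qfun_div hB hd hratio
    _ ≤ Mfun lam prior q n S A / d := by gcongr; exact lintegral_mono_set hBA
    _ ≤ c * Mfun lam prior q n Set.univ Set.univ / d := by
        gcongr; exact Mfun_le_mul_of_rpost_lt hq hS hc hpost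
    _ = c / d * Mfun lam prior q n Set.univ Set.univ := ENNReal.mul_div_right_comm

theorem setLIntegral_postMass_div [SFinite (lam n)] [SFinite (prior n)]
    (hq : Measurable fun z : χ n × Θ n => q n z.1 z.2) (S : Set (χ n)) (A : Set (Θ n))
    (K : ℝ≥0∞) :
    ∫⁻ x in S, postMass prior q n A x / K ∂lam n = Mfun lam prior q n S A / K := by
  simp_rw [div_eq_mul_inv]
  rw [lintegral_mul_const _ (measurable_postMass hq A), Mfun_eq_setLIntegral_postMass hq]

theorem postMass_le_of_div_density_lt {B : Set (Θ n)} {x : χ n} {y c d : ℝ≥0∞}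
    (hM₀ : Mfun lam prior q n Set.univ Set.univ ≠ 0)
    (hM : Mfun lam prior q n Set.univ Set.univ ≠ ∞) (hd : d ≠ ∞)
    (hB : postMass prior q n B x / Mfun lam prior q n Set.univ Set.univ / y < d)
    (hmarg : c < rmarg lam prior q n x / y) :
    postMass prior q n B x ≤ d / c * postMass prior q n Set.univ x := by
  rw [rmarg_eq_postMass_div] at hmarg
  have h := ENNReal.le_div_mul_of_div_lt_of_lt_div hd hB hmarg
  rwa [← mul_div_assoc, ENNReal.div_le_iff_le_mul (Or.inl hM₀) (Or.inl hM),
    ENNReal.div_mul_cancel hM₀ hM] at h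

end Model

section Family

variable {Ω : Type*} [MeasurableSpace Ω] {P : Measure Ω}
  {χ Θ : ℕ → Type*} [∀ n, MeasurableSpace (χ n)] [∀ n, MeasurableSpace (Θ n)]
  {lam : ∀ n, Measure (χ n)} [∀ n, SFinite (lam n)] {X : ∀ n, Ω → χ n}
  {g : ∀ n, χ n → ℝ≥0∞} {prior : ∀ n, Measure (Θ n)} [∀ n, SFinite (prior n)]
  {q : ∀ n, χ n → Θ n → ℝ}

theorem ae_eventually_postMass_le (hX : ∀ n, Measurable (X n)) (hg : ∀ n, Measurable (g n))
    (hlaw : ∀ n, P.map (X n) = (lam n).withDensity (g n))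
    (hq : ∀ n, Measurable (fun z : χ n × Θ n => q n z.1 z.2))
    (hM₀ : ∀ n, Mfun lam prior q n Set.univ Set.univ ≠ 0)
    (hM : ∀ n, Mfun lam prior q n Set.univ Set.univ ≠ ∞) {s : ℝ} (hs : 0 < s)
    (hmerge : ∀ᵐ ω ∂P, ∀ᶠ n in atTop, decay s n < rmarg lam prior q n (X n ω) / g n (X n ω))
    {S : ∀ n, Set (χ n)} (hS : ∀ n, MeasurableSet (S n)) {B : ∀ n, Set (Θ n)}
    (hB : ∀ n, Mfun lam prior q n (S n) (B n)
      ≤ decay (4 * s) n * Mfun lam prior q n Set.univ Set.univ) :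
    ∀ᵐ ω ∂P, ∀ᶠ n in atTop, X n ω ∈ S n →
      postMass prior q n (B n) (X n ω) ≤ decay s n * postMass prior q n Set.univ (X n ω) := by
  set f : ∀ n, χ n → ℝ≥0∞ := fun n =>
    (S n).indicator fun x => postMass prior q n (B n) x / Mfun lam prior q n Set.univ Set.univ
  have hint : ∀ n, ∫⁻ x, f n x ∂lam n ≤ decay (2 * (2 * s)) n := fun n => by
    rw [lintegral_indicator (hS n), setLIntegral_postMass_div (hq n), ← mul_assoc,
      show (2 : ℝ) * 2 = 4 by norm_num]
    exact ENNReal.div_le_of_le_mul (hB n)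
  have hf : ∀ n, Measurable (f n) := fun n =>
    ((measurable_postMass (hq n) (B n)).div_const _).indicator (hS n)
  filter_upwards [ae_eventually_div_density_lt hX hg hlaw hf (by positivity) hint, hmerge]
    with ω hf_lt hmarg
  filter_upwards [hf_lt, hmarg] with n hfn hmn hmem
  simp only [f, Set.indicator_of_mem hmem] at hfn
  simpa only [decay_two_mul_div_decay] using
    postMass_le_of_div_density_lt (hM₀ n) (hM n) decay_ne_top hfn hmn

theorem ae_eventually_rpost_compl_lt (hX : ∀ n, Measurable (X n))
    (hg : ∀ n, Measurable (g n)) (hlaw : ∀ n, P.map (X n) = (lam n).withDensity (g n))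
    (hq : ∀ n, Measurable (fun z : χ n × Θ n => q n z.1 z.2))
    (hM₀ : ∀ n, Mfun lam prior q n Set.univ Set.univ ≠ 0)
    (hM : ∀ n, Mfun lam prior q n Set.univ Set.univ ≠ ∞) {s : ℝ} (hs : 0 < s)
    (hmerge : ∀ᵐ ω ∂P, ∀ᶠ n in atTop, decay s n < rmarg lam prior q n (X n ω) / g n (X n ω))
    {A B C : ∀ n, Set (Θ n)} (hcov : ∀ n, A n ∪ B n ∪ C n = Set.univ)
    (hB : ∀ n, Mfun lam prior q n Set.univ (B n)
      ≤ decay (4 * s) n * Mfun lam prior q n Set.univ Set.univ)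
    {S : ∀ n, Set (χ n)} (hS : ∀ n, MeasurableSet (S n))
    (hX_S : ∀ᵐ ω ∂P, ∀ᶠ n in atTop, X n ω ∉ S n)
    (hC : ∀ n, Mfun lam prior q n (S n)ᶜ (C n)
      ≤ decay (4 * s) n * Mfun lam prior q n Set.univ Set.univ) :
    ∀ᵐ ω ∂P, ∀ᶠ n in atTop, rpost prior q n (A n)ᶜ (X n ω) < decay (s / 2) n := by
  filter_upwards [ae_eventually_postMass_le hX hg hlaw hq hM₀ hM hs hmerge
      (fun _ => MeasurableSet.univ) hB,
    ae_eventually_postMass_le hX hg hlaw hq hM₀ hM hs hmerge (fun n => (hS n).compl) hC,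
    hX_S] with ω hBω hCω hSω
  filter_upwards [hBω, hCω, hSω, eventually_decay_add_decay_lt hs] with n hBn hCn hSn hlt
  exact (rpost_compl_le_add (hcov n) (hBn trivial) (hCn hSn)).trans_lt hlt

end Family

theorem stmt_5_general
    {Ω : Type*} [MeasurableSpace Ω] (P : Measure Ω)
    {χ Θ : ℕ → Type*} [∀ n, MeasurableSpace (χ n)] [∀ n, MeasurableSpace (Θ n)]
    (lam : ∀ n, Measure (χ n)) [∀ n, SigmaFinite (lam n)]
    (X : ∀ n, Ω → χ n) (hX : ∀ n, Measurable (X n))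
    (g : ∀ n, χ n → ℝ≥0∞) (hgmeas : ∀ n, Measurable (g n))
    (hlaw : ∀ n, P.map (X n) = (lam n).withDensity (g n))
    (prior : ∀ n, Measure (Θ n)) (hprior : ∀ n, prior n Set.univ ≤ 1)
    (q : ∀ n, χ n → Θ n → ℝ)
    (hq : ∀ n, Measurable (fun z : χ n × Θ n => q n z.1 z.2))
    (hM : ∀ n, 0 < Mfun lam prior q n Set.univ Set.univ
      ∧ Mfun lam prior q n Set.univ Set.univ < ⊤)
    -- measurability of θ ↦ Q_n(S|θ)/Q_n(χ_n|θ)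
    (hQmeas : ∀ n (S : Set (χ n)), MeasurableSet S →
      Measurable (fun θ => Qfun lam q n S θ / Qfun lam q n Set.univ θ))
    -- merging with probability one of G^n and M_n^{(α)}
    (hmerge : ∀ ε : ℝ, 0 < ε → P (Filter.limsup (fun n : ℕ => {ω |
      rmarg lam prior q n (X n ω) / g n (X n ω)
        ≤ ENNReal.ofReal (Real.exp (-((n : ℝ) * ε)))}) atTop) = 0)
    (A : ∀ n, Set (Θ n)) (hAmeas : ∀ n, MeasurableSet (A n)) :
    (∃ r : ℝ, 0 < r ∧
      P (Filter.limsup (fun n : ℕ => {ω |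
        ENNReal.ofReal (Real.exp (-((n : ℝ) * r)))
          ≤ rpost prior q n (A n)ᶜ (X n ω)}) atTop) = 0)
    ↔ (∃ r₁ r₂ : ℝ, 0 < r₁ ∧ 0 < r₂ ∧
        ∃ B C : ∀ n, Set (Θ n), (∀ n, MeasurableSet (B n)) ∧ (∀ n, MeasurableSet (C n)) ∧
          (∀ n, A n ∪ B n ∪ C n = Set.univ) ∧
          (∀ n : ℕ, Mfun lam prior q n Set.univ (B n) / Mfun lam prior q n Set.univ Set.univ
            ≤ ENNReal.ofReal (Real.exp (-((n : ℝ) * r₁)))) ∧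
          (∃ S : ∀ n, Set (χ n), (∀ n, MeasurableSet (S n)) ∧
            P (Filter.limsup (fun n => {ω | X n ω ∈ S n}) atTop) = 0 ∧
            ∀ n : ℕ, ∀ θ ∈ C n, Qfun lam q n (S n)ᶜ θ / Qfun lam q n Set.univ θ
              ≤ ENNReal.ofReal (Real.exp (-((n : ℝ) * r₂))))) := by
  have : ∀ n, IsFiniteMeasure (prior n) := fun n => ⟨(hprior n).trans_lt one_lt_top⟩
  have hM₀ n := (hM n).1.ne'
  have hM_top n := (hM n).2.ne
  constructor
  · rintro ⟨r, hr, hP⟩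
    obtain ⟨t, rfl⟩ : ∃ t, r = 2 * t := ⟨r / 2, by ring⟩
    set S : ∀ n, Set (χ n) := fun n => {x | decay (2 * t) n ≤ rpost prior q n (A n)ᶜ x}
    set C : ∀ n, Set (Θ n) := fun n => (A n)ᶜ ∩
      {θ | Qfun lam q n (S n)ᶜ θ / Qfun lam q n Set.univ θ ≤ decay t n}
    have hS : ∀ n, MeasurableSet (S n) := fun n =>
      measurableSet_le measurable_const (measurable_rpost (hq n) _)
    have hC : ∀ n, MeasurableSet (C n) := fun n =>
      (hAmeas n).compl.inter (measurableSet_le (hQmeas n _ (hS n).compl) measurable_const)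
    refine ⟨t, t, by linarith, by linarith, fun n => (A n)ᶜ \ C n, C,
      fun n => (hAmeas n).compl.diff (hC n), hC, fun n => ?_, fun n => ?_, S, hS, hP,
      fun n θ hθ => hθ.2⟩
    · ext θ
      by_cases θ ∈ A n <;> by_cases θ ∈ C n <;> simp_all
    · change _ ≤ decay t n
      rw [← decay_two_mul_div_decay]
      exact ENNReal.div_le_of_le_mul <| Mfun_le_div_mul_of_rpost_lt (hq n) (hS n).compl
        ((hAmeas n).compl.diff (hC n)) Set.sdiff_subset decay_ne_top decay_ne_zero
        (fun x hx => not_le.1 hx) (fun θ hθ => not_le.1 fun h => hθ.2 ⟨hθ.1, h⟩)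
  · rintro ⟨r₁, r₂, hr₁, hr₂, B, C, -, hC, hcov, hB, S, hS, hSio, hQ⟩
    obtain ⟨s, hs, hs₁, hs₂⟩ : ∃ s, 0 < s ∧ 4 * s ≤ r₁ ∧ 4 * s ≤ r₂ :=
      ⟨min r₁ r₂ / 4, by positivity, by linarith [min_le_left r₁ r₂],
        by linarith [min_le_right r₁ r₂]⟩
    refine ⟨s / 2, half_pos hs, measure_limsup_setOf_le_eq_zero_iff.2 <|
      ae_eventually_rpost_compl_lt hX hgmeas hlaw hq hM₀ hM_top hs
        (measure_limsup_setOf_le_eq_zero_iff.1 (hmerge s hs)) hcov (fun n => ?_) hS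
        (measure_limsup_atTop_eq_zero_iff.1 hSio) (fun n => ?_)⟩
    · calc Mfun lam prior q n Set.univ (B n) ≤ decay r₁ n * Mfun lam prior q n Set.univ Set.univ :=
            (ENNReal.div_le_iff_le_mul (Or.inl (hM₀ n)) (Or.inl (hM_top n))).1 (hB n)
        _ ≤ _ := by gcongr; exact decay_le_decay hs₁ n
    · calc Mfun lam prior q n (S n)ᶜ (C n) ≤ decay r₂ n * Mfun lam prior q n Set.univ Set.univ :=
            Mfun_le_mul_of_Qfun_div_le (hC n) decay_ne_zero decay_ne_top (hQ n)
        _ ≤ _ := by gcongr; exact decay_le_decay hs₂ n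

/-- Theorem 1(2): exponential consistency of the `R^(α)`-posterior
probabilities, almost-sure form. -/
theorem stmt_5
    {Ω : Type*} [MeasurableSpace Ω] (P : Measure Ω) [IsProbabilityMeasure P]
    {χ Θ : ℕ → Type*} [∀ n, MeasurableSpace (χ n)] [∀ n, MeasurableSpace (Θ n)]
    (lam : ∀ n, Measure (χ n)) [∀ n, SigmaFinite (lam n)]
    (X : ∀ n, Ω → χ n) (hX : ∀ n, Measurable (X n))
    (g : ∀ n, χ n → ℝ≥0∞) (hgmeas : ∀ n, Measurable (g n))
    (hlaw : ∀ n, P.map (X n) = (lam n).withDensity (g n))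
    (prior : ∀ n, Measure (Θ n)) (hprior : ∀ n, prior n Set.univ ≤ 1)
    (q : ∀ n, χ n → Θ n → ℝ)
    (hq : ∀ n, Measurable (fun z : χ n × Θ n => q n z.1 z.2))
    (hM : ∀ n, 0 < Mfun lam prior q n Set.univ Set.univ
      ∧ Mfun lam prior q n Set.univ Set.univ < ⊤)
    -- measurability of θ ↦ Q_n(S|θ)/Q_n(χ_n|θ)
    (hQmeas : ∀ n (S : Set (χ n)), MeasurableSet S →
      Measurable (fun θ => Qfun lam q n S θ / Qfun lam q n Set.univ θ))
    -- merging with probability one of G^n and M_n^{(α)}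
    (hmerge : ∀ ε : ℝ, 0 < ε → P (Filter.limsup (fun n : ℕ => {ω |
      rmarg lam prior q n (X n ω) / g n (X n ω)
        ≤ ENNReal.ofReal (Real.exp (-((n : ℝ) * ε)))}) atTop) = 0)
    (A : ∀ n, Set (Θ n)) (hAmeas : ∀ n, MeasurableSet (A n)) :
    (∃ r : ℝ, 0 < r ∧
      P (Filter.limsup (fun n : ℕ => {ω |
        ENNReal.ofReal (Real.exp (-((n : ℝ) * r)))
          ≤ rpost prior q n (A n)ᶜ (X n ω)}) atTop) = 0)
    ↔ (∃ r₁ r₂ : ℝ, 0 < r₁ ∧ 0 < r₂ ∧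
        ∃ B C : ∀ n, Set (Θ n), (∀ n, MeasurableSet (B n)) ∧ (∀ n, MeasurableSet (C n)) ∧
          (∀ n, A n ∪ B n ∪ C n = Set.univ) ∧
          (∀ n : ℕ, Mfun lam prior q n Set.univ (B n) / Mfun lam prior q n Set.univ Set.univ
            ≤ ENNReal.ofReal (Real.exp (-((n : ℝ) * r₁)))) ∧
          (∃ S : ∀ n, Set (χ n), (∀ n, MeasurableSet (S n)) ∧
            P (Filter.limsup (fun n => {ω | X n ω ∈ S n}) atTop) = 0 ∧
            ∀ n : ℕ, ∀ θ ∈ C n, Qfun lam q n (S n)ᶜ θ / Qfun lam q n Set.univ θ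
              ≤ ENNReal.ofReal (Real.exp (-((n : ℝ) * r₂))))) :=
  stmt_5_general P lam X hX g hgmeas hlaw prior hprior q hq hM hQmeas hmerge A hAmeas
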